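/- For p ∈ [0,1] and T = p·I (the 3×3 matrix with p on the diagonal), the maximum over unit vectors a1, a2, a3, b1, b2, b3, b4 in R^3 of a1ᵀT(b1+b2-b3-b4) + a2ᵀT(b1-b2+b3-b4) + a3ᵀT(b1-b2-b3+b4) equals 4√3·p; consequently this exceeds the classical bound 6 if and only if p > √3/2. -/

import Mathlib

/-!
With `T = p • 1` each term `aᵢᵀ T vᵢ` is `p ⟪aᵢ, vᵢ⟫ ≤ p ‖vᵢ‖`, where `v₁, v₂, v₃` are the three
signed sums of the `bⱼ`. Together with `b₁ + b₂ + b₃ + b₄` they are the rows of a 4 × 4 Hadamard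
matrix applied to `(bⱼ)`, so their squared norms add up to `4 ∑ ‖bⱼ‖² = 16`; by Cauchy–Schwarz
`‖v₁‖ + ‖v₂‖ + ‖v₃‖ ≤ √(3 · 16) = 4√3`. Equality is attained when the `bⱼ` point to alternate
vertices of a cube and `aᵢ` is the coordinate direction of `vᵢ`.
-/

open Matrix

open scoped RealInnerProductSpace

section InnerProductSpace

variable {E : Type*} [NormedAddCommGroup E] [InnerProductSpace ℝ E]

/-- The value of Gisin's elegant Bell expression for the quantum correlations `⟪a, b⟫`. -/
noncomputable def elegantBell (a₁ a₂ a₃ b₁ b₂ b₃ b₄ : E) : ℝ :=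
  ⟪a₁, b₁ + b₂ - b₃ - b₄⟫ + ⟪a₂, b₁ - b₂ + b₃ - b₄⟫ + ⟪a₃, b₁ - b₂ - b₃ + b₄⟫

theorem norm_sq_hadamard_add {𝕜 F : Type*} [RCLike 𝕜] [NormedAddCommGroup F]
    [InnerProductSpace 𝕜 F] (b₁ b₂ b₃ b₄ : F) :
    ‖b₁ + b₂ - b₃ - b₄‖ ^ 2 + ‖b₁ - b₂ + b₃ - b₄‖ ^ 2 + ‖b₁ - b₂ - b₃ + b₄‖ ^ 2 +
        ‖b₁ + b₂ + b₃ + b₄‖ ^ 2 =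
      4 * (‖b₁‖ ^ 2 + ‖b₂‖ ^ 2 + ‖b₃‖ ^ 2 + ‖b₄‖ ^ 2) := by
  have h₁ := parallelogram_law_with_norm 𝕜 (b₁ + b₂) (b₃ + b₄)
  have h₂ := parallelogram_law_with_norm 𝕜 (b₁ - b₂) (b₃ - b₄)
  have h₁₂ := parallelogram_law_with_norm 𝕜 b₁ b₂
  have h₃₄ := parallelogram_law_with_norm 𝕜 b₃ b₄
  rw [show b₁ + b₂ - b₃ - b₄ = b₁ + b₂ - (b₃ + b₄) by abel,
    show b₁ - b₂ + b₃ - b₄ = b₁ - b₂ + (b₃ - b₄) by abel,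
    show b₁ - b₂ - b₃ + b₄ = b₁ - b₂ - (b₃ - b₄) by abel,
    show b₁ + b₂ + b₃ + b₄ = b₁ + b₂ + (b₃ + b₄) by abel]
  linear_combination h₁ + h₂ + 2 * h₁₂ + 2 * h₃₄

theorem add_add_le_sqrt_three_mul {x y z c : ℝ} (h : x ^ 2 + y ^ 2 + z ^ 2 ≤ c) :
    x + y + z ≤ √(3 * c) :=
  Real.le_sqrt_of_sq_le <| by
    nlinarith [sq_nonneg (x - y), sq_nonneg (y - z), sq_nonneg (x - z)]

theorem norm_hadamard_add_le {b₁ b₂ b₃ b₄ : E}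
    (h₁ : ‖b₁‖ ≤ 1) (h₂ : ‖b₂‖ ≤ 1) (h₃ : ‖b₃‖ ≤ 1) (h₄ : ‖b₄‖ ≤ 1) :
    ‖b₁ + b₂ - b₃ - b₄‖ + ‖b₁ - b₂ + b₃ - b₄‖ + ‖b₁ - b₂ - b₃ + b₄‖ ≤ 4 * √3 := by
  have hsq : ‖b₁ + b₂ - b₃ - b₄‖ ^ 2 + ‖b₁ - b₂ + b₃ - b₄‖ ^ 2 +
      ‖b₁ - b₂ - b₃ + b₄‖ ^ 2 ≤ 16 := by
    have := norm_sq_hadamard_add (𝕜 := ℝ) b₁ b₂ b₃ b₄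
    have := pow_le_one₀ (n := 2) (norm_nonneg b₁) h₁
    have := pow_le_one₀ (n := 2) (norm_nonneg b₂) h₂
    have := pow_le_one₀ (n := 2) (norm_nonneg b₃) h₃
    have := pow_le_one₀ (n := 2) (norm_nonneg b₄) h₄
    nlinarith [sq_nonneg ‖b₁ + b₂ + b₃ + b₄‖]
  calc _ ≤ √(3 * 16) := add_add_le_sqrt_three_mul hsq
    _ = 4 * √3 := by
      rw [show (3 : ℝ) * 16 = 4 ^ 2 * 3 by norm_num, Real.sqrt_mul' _ (by norm_num),
        Real.sqrt_sq (by norm_num)]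

theorem inner_le_norm_of_norm_le_one {a : E} (ha : ‖a‖ ≤ 1) (v : E) : ⟪a, v⟫ ≤ ‖v‖ :=
  (real_inner_le_norm a v).trans (mul_le_of_le_one_left (norm_nonneg v) ha)

theorem elegantBell_le {a₁ a₂ a₃ b₁ b₂ b₃ b₄ : E}
    (ha₁ : ‖a₁‖ ≤ 1) (ha₂ : ‖a₂‖ ≤ 1) (ha₃ : ‖a₃‖ ≤ 1)
    (hb₁ : ‖b₁‖ ≤ 1) (hb₂ : ‖b₂‖ ≤ 1) (hb₃ : ‖b₃‖ ≤ 1) (hb₄ : ‖b₄‖ ≤ 1) :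
    elegantBell a₁ a₂ a₃ b₁ b₂ b₃ b₄ ≤ 4 * √3 :=
  calc elegantBell a₁ a₂ a₃ b₁ b₂ b₃ b₄
      ≤ ‖b₁ + b₂ - b₃ - b₄‖ + ‖b₁ - b₂ + b₃ - b₄‖ + ‖b₁ - b₂ - b₃ + b₄‖ := by
        unfold elegantBell
        gcongr <;> apply inner_le_norm_of_norm_le_one <;> assumption
    _ ≤ 4 * √3 := norm_hadamard_add_le hb₁ hb₂ hb₃ hb₄

end InnerProductSpace

theorem dotProduct_smul_one_mulVec {n : Type*} [Fintype n] [DecidableEq n] (p : ℝ)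
    (a v : EuclideanSpace ℝ n) :
    a ⬝ᵥ (p • (1 : Matrix n n ℝ)) *ᵥ v = p * ⟪a, v⟫ := by
  rw [smul_mulVec, one_mulVec, dotProduct_smul, EuclideanSpace.inner_eq_star_dotProduct,
    star_trivial, dotProduct_comm, smul_eq_mul]

theorem dotProduct_smul_one_mulVec_bell {n : Type*} [Fintype n] [DecidableEq n] (p : ℝ)
    (a₁ a₂ a₃ b₁ b₂ b₃ b₄ : EuclideanSpace ℝ n) :
    a₁ ⬝ᵥ (p • (1 : Matrix n n ℝ)) *ᵥ (b₁ + b₂ - b₃ - b₄) +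
        a₂ ⬝ᵥ (p • (1 : Matrix n n ℝ)) *ᵥ (b₁ - b₂ + b₃ - b₄) +
        a₃ ⬝ᵥ (p • (1 : Matrix n n ℝ)) *ᵥ (b₁ - b₂ - b₃ + b₄) =
      p * elegantBell a₁ a₂ a₃ b₁ b₂ b₃ b₄ := by
  simp only [← WithLp.ofLp_add, ← WithLp.ofLp_sub, dotProduct_smul_one_mulVec, elegantBell]
  ring

theorem EuclideanSpace.norm_vec3 (x y z : ℝ) : ‖!₂[x, y, z]‖ = √(x ^ 2 + y ^ 2 + z ^ 2) := by
  simp [EuclideanSpace.norm_eq, Fin.sum_univ_three]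

theorem EuclideanSpace.norm_vec3_eq_one {x y z : ℝ}
    (hx : x ^ 2 = 1 / 3) (hy : y ^ 2 = 1 / 3) (hz : z ^ 2 = 1 / 3) : ‖!₂[x, y, z]‖ = 1 := by
  rw [EuclideanSpace.norm_vec3, hx, hy, hz]
  norm_num

theorem exists_elegantBell_eq :
    ∃ a₁ a₂ a₃ b₁ b₂ b₃ b₄ : EuclideanSpace ℝ (Fin 3),
      ‖a₁‖ = 1 ∧ ‖a₂‖ = 1 ∧ ‖a₃‖ = 1 ∧ ‖b₁‖ = 1 ∧ ‖b₂‖ = 1 ∧ ‖b₃‖ = 1 ∧ ‖b₄‖ = 1 ∧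
        elegantBell a₁ a₂ a₃ b₁ b₂ b₃ b₄ = 4 * √3 := by
  set q := √3 / 3
  have hq : q ^ 2 = 1 / 3 := by
    rw [div_pow, Real.sq_sqrt (by norm_num)]
    norm_num
  have hq' : (-q) ^ 2 = 1 / 3 := by rw [neg_sq, hq]
  refine ⟨EuclideanSpace.single 0 1, EuclideanSpace.single 1 1, EuclideanSpace.single 2 1,
    !₂[q, q, q], !₂[q, -q, -q], !₂[-q, q, -q], !₂[-q, -q, q], by simp, by simp, by simp,
    EuclideanSpace.norm_vec3_eq_one hq hq hq, EuclideanSpace.norm_vec3_eq_one hq hq' hq',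
    EuclideanSpace.norm_vec3_eq_one hq' hq hq', EuclideanSpace.norm_vec3_eq_one hq' hq' hq, ?_⟩
  simp [elegantBell, EuclideanSpace.inner_single_left, q]
  ring

theorem stmt_17 (p : ℝ) (hp : p ∈ Set.Icc (0 : ℝ) 1)
    (T : Matrix (Fin 3) (Fin 3) ℝ) (hT : T = p • (1 : Matrix (Fin 3) (Fin 3) ℝ)) :
    IsGreatest
      {s : ℝ | ∃ a1 a2 a3 b1 b2 b3 b4 : EuclideanSpace ℝ (Fin 3),
        ‖a1‖ = 1 ∧ ‖a2‖ = 1 ∧ ‖a3‖ = 1 ∧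
        ‖b1‖ = 1 ∧ ‖b2‖ = 1 ∧ ‖b3‖ = 1 ∧ ‖b4‖ = 1 ∧
        s = a1 ⬝ᵥ T.mulVec (b1 + b2 - b3 - b4) + a2 ⬝ᵥ T.mulVec (b1 - b2 + b3 - b4) +
            a3 ⬝ᵥ T.mulVec (b1 - b2 - b3 + b4)}
      (4 * Real.sqrt 3 * p) ∧
    (4 * Real.sqrt 3 * p > 6 ↔ p > Real.sqrt 3 / 2) := by
  subst hT
  simp only [dotProduct_smul_one_mulVec_bell]
  refine ⟨⟨?_, ?_⟩, ?_⟩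
  · obtain ⟨a₁, a₂, a₃, b₁, b₂, b₃, b₄, h₁, h₂, h₃, h₄, h₅, h₆, h₇, hbell⟩ := exists_elegantBell_eq
    exact ⟨a₁, a₂, a₃, b₁, b₂, b₃, b₄, h₁, h₂, h₃, h₄, h₅, h₆, h₇, by rw [hbell, mul_comm]⟩
  · rintro s ⟨a₁, a₂, a₃, b₁, b₂, b₃, b₄, h₁, h₂, h₃, h₄, h₅, h₆, h₇, rfl⟩
    rw [mul_comm p]
    exact mul_le_mul_of_nonneg_right (elegantBell_le h₁.le h₂.le h₃.le h₄.le h₅.le h₆.le h₇.le)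
      hp.1
  · have hsix : 4 * √3 * (√3 / 2) = 6 := by
      rw [mul_assoc, mul_div_assoc', Real.mul_self_sqrt (by norm_num)]
      norm_num
    rw [gt_iff_lt, ← hsix, mul_lt_mul_iff_right₀ (by positivity)]
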